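/- arXiv:2110.00611 — 2 statements merged into one kernel-verified Lean document; each statement's English description precedes it below -/
import Mathlib

section
/- Minimax theorem via intersection property: Let Φ be a convex set of real-valued functions on X and L(x,φ) := f(x) + φ(x) − g*_Φ(φ). Suppose for every α < inf_x sup_{φ∈Φ} L(x,φ) there exist φ₁, φ₂ ∈ Φ and φ̄₁ ∈ supp L(·,φ₁), φ̄₂ ∈ supp L(·,φ₂) having the intersection property on X at level α. Then inf_{x∈X} sup_{φ∈Φ} L(x,φ) = sup_{φ∈Φ} inf_{x∈X} L(x,φ). -/
/-!
If the minimax inequality were strict, pick a real level `α` strictly between the two sides and the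
minorants `φ̄₁, φ̄₂` it provides. Since the `Φ`-conjugate is convex, `L(x, ·)` is concave, so every
convex combination `t φ̄₁ + (1 - t) φ̄₂` is a minorant of `L(·, t φ₁ + (1 - t) φ₂)`, whose infimum
lies below `α`; hence each such combination dips below `α` somewhere. The sets of `t ∈ [0, 1]` for
which `t φ̄₁ + (1 - t) φ̄₂ ≥ α` on `[φ̄ᵢ < α]` are closed, cover `[0, 1]` by the intersection
property, contain `0` resp. `1`, and cannot meet: this contradicts the connectedness of `[0, 1]`.
-/

/-- Φ-conjugate. -/
noncomputable def phiConj {X : Type*} (g : X → EReal) (φ : X → ℝ) : EReal :=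
  ⨆ y : X, ((φ y : EReal) - g y)

/-- The Φ-Lagrangian `L(x,φ) := f(x) + φ(x) − g*_Φ(φ)`. -/
noncomputable def phiLagrangian {X : Type*} (f g : X → EReal) (x : X) (φ : X → ℝ) : EReal :=
  f x + (φ x : EReal) - phiConj g φ

/-- Intersection property at level `α`. -/
def IntersectionProperty {X : Type*} (φ₁ φ₂ : X → ℝ) (α : ℝ) : Prop :=
  ∀ t : ℝ, t ∈ Set.Icc (0 : ℝ) 1 →
    ({x : X | t * φ₁ x + (1 - t) * φ₂ x < α} ∩ {x : X | φ₁ x < α} = ∅ ∨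
     {x : X | t * φ₁ x + (1 - t) * φ₂ x < α} ∩ {x : X | φ₂ x < α} = ∅)

open Set

namespace EReal

theorem coe_le_add_coe_sub_coe_iff {e : EReal} {c b r : ℝ} :
    (c : EReal) ≤ e + b - r ↔ ((c + r - b : ℝ) : EReal) ≤ e := by
  induction e with
  | bot => simp only [bot_add, bot_sub, le_bot_iff, coe_ne_bot]
  | top => simp only [top_add_coe, top_sub_coe, le_top]
  | coe e =>
    norm_cast
    constructor <;> intro h <;> linarith

theorem coe_sub_le_coe_iff {e : EReal} {a r : ℝ} :
    (a : EReal) - e ≤ r ↔ ((a - r : ℝ) : EReal) ≤ e := by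
  induction e with
  | bot => simp only [coe_sub_bot, top_le_iff, coe_ne_top, le_bot_iff, coe_ne_bot]
  | top => simp only [sub_top, bot_le, le_top]
  | coe e =>
    norm_cast
    constructor <;> intro h <;> linarith

theorem coe_convexComb_le {t a₁ a₂ : ℝ} {e : EReal} (ht : t ∈ Icc (0 : ℝ) 1)
    (h₁ : (a₁ : EReal) ≤ e) (h₂ : (a₂ : EReal) ≤ e) :
    ((t * a₁ + (1 - t) * a₂ : ℝ) : EReal) ≤ e := by
  rcases le_total a₁ a₂ with h | h
  · refine le_trans (EReal.coe_le_coe_iff.2 ?_) h₂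
    nlinarith [ht.1]
  · refine le_trans (EReal.coe_le_coe_iff.2 ?_) h₁
    nlinarith [ht.2]

end EReal

section PhiConjugate

variable {X : Type*} {f g : X → EReal} {φ φ₁ φ₂ : X → ℝ}

theorem le_phiConj (y : X) : (φ y : EReal) - g y ≤ phiConj g φ :=
  le_iSup (fun y => (φ y : EReal) - g y) y

theorem phiConj_ne_bot (hg : ∃ y, g y ≠ ⊤) : phiConj g φ ≠ ⊥ := by
  obtain ⟨y, hy⟩ := hg
  refine bot_lt_iff_ne_bot.1 (lt_of_lt_of_le ?_ (le_phiConj (g := g) (φ := φ) y))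
  revert hy
  induction g y with
  | bot => simp
  | top => simp
  | coe s => exact fun _ => mod_cast EReal.bot_lt_coe (φ y - s)

theorem phiConj_ne_top_of_coe_le_phiLagrangian {x : X} {c : ℝ}
    (h : (c : EReal) ≤ phiLagrangian f g x φ) : phiConj g φ ≠ ⊤ := by
  intro htop
  rw [phiLagrangian, htop, EReal.sub_top] at h
  exact EReal.coe_ne_bot c (le_bot_iff.1 h)

theorem phiConj_convexComb_le {t r₁ r₂ : ℝ} (ht : t ∈ Icc (0 : ℝ) 1)
    (h₁ : phiConj g φ₁ ≤ r₁) (h₂ : phiConj g φ₂ ≤ r₂) :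
    phiConj g (fun y => t * φ₁ y + (1 - t) * φ₂ y) ≤ ((t * r₁ + (1 - t) * r₂ : ℝ) : EReal) :=
  iSup_le fun y => by
    have h₁ := EReal.coe_sub_le_coe_iff.1 ((le_phiConj y).trans h₁)
    have h₂ := EReal.coe_sub_le_coe_iff.1 ((le_phiConj y).trans h₂)
    rw [EReal.coe_sub_le_coe_iff]
    convert EReal.coe_convexComb_le ht h₁ h₂ using 2
    ring

/-- Concavity of `L(x, ·)`, in the form in which it transports real minorants. -/
theorem coe_convexComb_le_phiLagrangian (hg : ∃ y, g y ≠ ⊤) {x : X} {t c₁ c₂ : ℝ}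
    (ht : t ∈ Icc (0 : ℝ) 1) (h₁ : (c₁ : EReal) ≤ phiLagrangian f g x φ₁)
    (h₂ : (c₂ : EReal) ≤ phiLagrangian f g x φ₂) :
    ((t * c₁ + (1 - t) * c₂ : ℝ) : EReal) ≤
      phiLagrangian f g x (fun y => t * φ₁ y + (1 - t) * φ₂ y) := by
  lift phiConj g φ₁ to ℝ using ⟨phiConj_ne_top_of_coe_le_phiLagrangian h₁, phiConj_ne_bot hg⟩
    with r₁ hr₁
  lift phiConj g φ₂ to ℝ using ⟨phiConj_ne_top_of_coe_le_phiLagrangian h₂, phiConj_ne_bot hg⟩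
    with r₂ hr₂
  rw [phiLagrangian, ← hr₁, EReal.coe_le_add_coe_sub_coe_iff] at h₁
  rw [phiLagrangian, ← hr₂, EReal.coe_le_add_coe_sub_coe_iff] at h₂
  refine le_trans ?_ (EReal.sub_le_sub le_rfl (phiConj_convexComb_le ht hr₁.ge hr₂.ge))
  rw [EReal.coe_le_add_coe_sub_coe_iff]
  convert EReal.coe_convexComb_le ht h₁ h₂ using 2
  ring

end PhiConjugate

theorem IntersectionProperty.exists_forall_le {X : Type*} {ψ₁ ψ₂ : X → ℝ} {α : ℝ}
    (h : IntersectionProperty ψ₁ ψ₂ α) :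
    ∃ t ∈ Icc (0 : ℝ) 1, ∀ x, α ≤ t * ψ₁ x + (1 - t) * ψ₂ x := by
  by_contra! hlt
  set S : (X → ℝ) → Set ℝ := fun ψ => {t | ∀ x, ψ x < α → α ≤ t * ψ₁ x + (1 - t) * ψ₂ x}
  have hclosed : ∀ ψ, IsClosed (S ψ) := fun ψ => by
    simp only [S, ofPred_forall]
    exact isClosed_iInter fun x => isClosed_iInter fun _ => isClosed_le continuous_const (by fun_prop)
  have hcover : Icc 0 1 ⊆ S ψ₁ ∪ S ψ₂ := fun t ht =>
    (h t ht).imp (fun hempty x hx => not_lt.1 fun hcomb => hempty.subset ⟨hcomb, hx⟩)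
      (fun hempty x hx => not_lt.1 fun hcomb => hempty.subset ⟨hcomb, hx⟩)
  have h0 : (0 : ℝ) ∈ S ψ₁ := by
    obtain ⟨x, hx⟩ := hlt 0 (left_mem_Icc.2 zero_le_one)
    refine (hcover (left_mem_Icc.2 zero_le_one)).resolve_right fun hS => (hS x ?_).not_gt hx
    simpa using hx
  have h1 : (1 : ℝ) ∈ S ψ₂ := by
    obtain ⟨x, hx⟩ := hlt 1 (right_mem_Icc.2 zero_le_one)
    refine (hcover (right_mem_Icc.2 zero_le_one)).resolve_left fun hS => (hS x ?_).not_gt hx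
    simpa using hx
  obtain ⟨t, ht, ht₁, ht₂⟩ := isPreconnected_closed_iff.1 isPreconnected_Icc _ _
    (hclosed ψ₁) (hclosed ψ₂) hcover ⟨0, left_mem_Icc.2 zero_le_one, h0⟩
    ⟨1, right_mem_Icc.2 zero_le_one, h1⟩
  obtain ⟨x, hx⟩ := hlt t ht
  have : ψ₁ x < α ∨ ψ₂ x < α := by
    by_contra! hge
    nlinarith [ht.1, ht.2]
  rcases this with hψ | hψ
  exacts [(ht₁ x hψ).not_gt hx, (ht₂ x hψ).not_gt hx]

theorem minimax_of_intersection_property_general {X : Type*}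
    (Φ : Set (X → ℝ))
    (hconv : ∀ φ₁ ∈ Φ, ∀ φ₂ ∈ Φ, ∀ t : ℝ, t ∈ Set.Icc (0 : ℝ) 1 →
      (fun x => t * φ₁ x + (1 - t) * φ₂ x) ∈ Φ)
    (f g : X → EReal)
    (hgproper : ∃ y, g y ≠ ⊤)
    (hip : ∀ α : ℝ, (α : EReal) < (⨅ x : X, ⨆ φ ∈ Φ, phiLagrangian f g x φ) →
      ∃ φ₁ ∈ Φ, ∃ φ₂ ∈ Φ, ∃ φb₁ φb₂ : X → ℝ,
        (∀ x : X, (φb₁ x : EReal) ≤ phiLagrangian f g x φ₁) ∧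
        (∀ x : X, (φb₂ x : EReal) ≤ phiLagrangian f g x φ₂) ∧
        IntersectionProperty φb₁ φb₂ α) :
    (⨅ x : X, ⨆ φ ∈ Φ, phiLagrangian f g x φ) =
      ⨆ φ ∈ Φ, ⨅ x : X, phiLagrangian f g x φ := by
  refine le_antisymm ?_
    (iSup₂_le fun φ hφ => le_iInf fun x => iInf_le_of_le x (le_iSup₂_of_le φ hφ le_rfl))
  by_contra! hlt
  obtain ⟨α, hsup, hα⟩ := EReal.exists_between_coe_real hlt
  obtain ⟨φ₁, hφ₁, φ₂, hφ₂, ψ₁, ψ₂, hψ₁, hψ₂, hIP⟩ := hip α hα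
  obtain ⟨t, ht, hge⟩ := hIP.exists_forall_le
  have hαle : (α : EReal) ≤ ⨅ x, phiLagrangian f g x (fun y => t * φ₁ y + (1 - t) * φ₂ y) :=
    le_iInf fun x => (EReal.coe_le_coe_iff.2 (hge x)).trans
      (coe_convexComb_le_phiLagrangian hgproper ht (hψ₁ x) (hψ₂ x))
  exact (hαle.trans (le_iSup₂_of_le _ (hconv φ₁ hφ₁ φ₂ hφ₂ t ht) le_rfl)).not_gt hsup

/-- Minimax theorem via the intersection property: if `Φ` is a convex class
and for every `α` below the primal value there exist `φ₁, φ₂ ∈ Φ` and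
minorants `φ̄₁ ≤ L(·,φ₁)`, `φ̄₂ ≤ L(·,φ₂)` with the intersection property at
level `α`, then the minimax equality holds. -/
theorem minimax_of_intersection_property {X : Type*} [AddCommGroup X] [Module ℝ X]
    (Φ : Set (X → ℝ))
    (hconv : ∀ φ₁ ∈ Φ, ∀ φ₂ ∈ Φ, ∀ t : ℝ, t ∈ Set.Icc (0 : ℝ) 1 →
      (fun x => t * φ₁ x + (1 - t) * φ₂ x) ∈ Φ)
    (f g : X → EReal) (hf : ∀ y, f y ≠ ⊥) (hg : ∀ y, g y ≠ ⊥)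
    (hfproper : ∃ y, f y ≠ ⊤) (hgproper : ∃ y, g y ≠ ⊤)
    (hip : ∀ α : ℝ, (α : EReal) < (⨅ x : X, ⨆ φ ∈ Φ, phiLagrangian f g x φ) →
      ∃ φ₁ ∈ Φ, ∃ φ₂ ∈ Φ, ∃ φb₁ φb₂ : X → ℝ,
        (∀ x : X, (φb₁ x : EReal) ≤ phiLagrangian f g x φ₁) ∧
        (∀ x : X, (φb₂ x : EReal) ≤ phiLagrangian f g x φ₂) ∧
        IntersectionProperty φb₁ φb₂ α) :
    (⨅ x : X, ⨆ φ ∈ Φ, phiLagrangian f g x φ) =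
      ⨆ φ ∈ Φ, ⨅ x : X, phiLagrangian f g x φ :=
  minimax_of_intersection_property_general Φ hconv f g hgproper hip
end

section
/- Let X be a Hilbert space and f, g: X → (-∞,+∞] be Φ_lsc-convex. Suppose x* ∈ X and φ* = (a*, w*) ∈ Φ_lsc satisfy (0,−w*) ∈ ∂_lsc f̃(x*) where f̃(x) := f(x) − a*‖x‖², and x* ∈ ∂_X g*_lsc(φ*). Then f(x*) + g(x*) = −f̃*_lsc(0,−w*) − g*_lsc(a*,w*) and this value equals inf_{x∈X}(f(x)+g(x)). -/
/-!
Both KKT conditions are equality cases of the Fenchel–Young inequality. The subgradient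
inequality for `f̃ = f - a*‖·‖²` at `x*` makes `x*` a maximiser in `f̃*(0, -w*)`; since `g` is the
supremum of its `Φ_lsc`-minorants, `x* ∈ ∂g*(φ*)` forces `g*(φ*) = φ*(x*) - g(x*)`. As the
quadratic and linear terms cancel, `f + g` is the sum of the two Fenchel–Young gaps, which is at
least `-f̃*(0, -w*) - g*(φ*)` everywhere and equal to it at `x*`.
-/

open scoped RealInnerProductSpace

/-- The class `Φ_lsc` on a Hilbert space. -/
def PhiLsc (X : Type*) [NormedAddCommGroup X] [InnerProductSpace ℝ X] :
    Set (X → ℝ) :=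
  {φ | ∃ a : ℝ, 0 ≤ a ∧ ∃ v : X, ∃ c : ℝ,
    ∀ x : X, φ x = -a * ‖x‖ ^ 2 + ⟪v, x⟫ + c}

/-- `h` is Φ_lsc-convex. -/
def PhiLscConvex {X : Type*} [NormedAddCommGroup X] [InnerProductSpace ℝ X]
    (h : X → EReal) : Prop :=
  ∀ x : X, h x = ⨆ φ ∈ {φ ∈ PhiLsc X | ∀ y : X, (φ y : EReal) ≤ h y}, (φ x : EReal)

/-- `Φ_lsc`-conjugate of `h` at the elementary function `x ↦ −a‖x‖² + ⟨w,x⟩ + c`. -/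
noncomputable def lscConj {X : Type*} [NormedAddCommGroup X]
    [InnerProductSpace ℝ X] (h : X → EReal) (a : ℝ) (w : X) (c : ℝ) : EReal :=
  ⨆ x : X, (((-a * ‖x‖ ^ 2 + ⟪w, x⟫ + c : ℝ) : EReal) - h x)

namespace EReal

lemma le_coe_sub_comm {u v : EReal} {r : ℝ} (h : u ≤ r - v) : v ≤ r - u := by
  rw [le_sub_iff_add_le (.inr (coe_ne_bot r)) (.inr (coe_ne_top r))] at h ⊢
  rwa [add_comm]

lemma coe_sub_le_coe_sub_of_coe_sub_le_sub {s t : ℝ} {u v : EReal}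
    (h : ((s - t : ℝ) : EReal) ≤ u - v) : (s : EReal) - u ≤ t - v := by
  induction u <;> induction v <;> simp_all [← coe_sub]
  linarith

lemma add_eq_neg_coe_sub_sub_coe_sub {p q : EReal} {α s₁ s₂ : ℝ} (h : α + s₁ + s₂ = 0) :
    p + q = -(s₁ - (p - α)) - (s₂ - q) := by
  induction p <;> induction q <;> simp_all [← coe_sub, ← coe_add, ← coe_neg]
  linarith

end EReal

lemma iSup_coe_sub_eq_of_subgradient {ι : Type*} (ψ : ι → ℝ) (h : ι → EReal) (i₀ : ι)
    (H : ∀ i, ((ψ i - ψ i₀ : ℝ) : EReal) ≤ h i - h i₀) :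
    ⨆ i, (ψ i : EReal) - h i = ψ i₀ - h i₀ :=
  le_antisymm (iSup_le fun i => EReal.coe_sub_le_coe_sub_of_coe_sub_le_sub (H i))
    (le_iSup (fun i => (ψ i : EReal) - h i) i₀)

section PhiLsc

variable {X : Type*} [NormedAddCommGroup X] [InnerProductSpace ℝ X]

lemma coe_sub_le_lscConj (h : X → EReal) (a : ℝ) (w : X) (c : ℝ) (x : X) :
    ((-a * ‖x‖ ^ 2 + ⟪w, x⟫ + c : ℝ) : EReal) - h x ≤ lscConj h a w c :=
  le_iSup (fun y => ((-a * ‖y‖ ^ 2 + ⟪w, y⟫ + c : ℝ) : EReal) - h y) x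

lemma lscConj_nonpos_of_le {h : X → EReal} {a : ℝ} {w : X} {c : ℝ}
    (hle : ∀ y, ((-a * ‖y‖ ^ 2 + ⟪w, y⟫ + c : ℝ) : EReal) ≤ h y) : lscConj h a w c ≤ 0 :=
  iSup_le fun y => EReal.sub_nonpos.2 (hle y)

/-- Every `Φ_lsc`-minorant `φ` of `h` has `h*(φ) ≤ 0`, so the subgradient inequality bounds
`φ x₀` by `r - B`; `h` is the supremum of these minorants. -/
lemma PhiLscConvex.le_coe_sub_of_subgradient {h : X → EReal} (hh : PhiLscConvex h) {x₀ : X}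
    {r : ℝ} {B : EReal}
    (H : ∀ a : ℝ, 0 ≤ a → ∀ w : X, ∀ c : ℝ,
      lscConj h a w c - B ≥ (((-a * ‖x₀‖ ^ 2 + ⟪w, x₀⟫ + c) - r : ℝ) : EReal)) :
    h x₀ ≤ r - B := by
  rw [hh x₀]
  refine iSup₂_le ?_
  rintro φ ⟨⟨a, ha, w, c, hφ⟩, hφle⟩
  have hconj : lscConj h a w c ≤ 0 := lscConj_nonpos_of_le fun y => hφ y ▸ hφle y
  have hgap : ((φ x₀ - r : ℝ) : EReal) ≤ -B := by
    calc ((φ x₀ - r : ℝ) : EReal) ≤ lscConj h a w c - B := hφ x₀ ▸ H a ha w c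
      _ ≤ 0 - B := EReal.sub_le_sub hconj le_rfl
      _ = -B := zero_sub B
  calc (φ x₀ : EReal) = r + ((φ x₀ - r : ℝ) : EReal) := by norm_cast; ring
    _ ≤ r + -B := add_le_add le_rfl hgap
    _ = r - B := (sub_eq_add_neg _ _).symm

end PhiLsc

theorem kkt_sufficient_lsc_general {X : Type*} [NormedAddCommGroup X]
    [InnerProductSpace ℝ X]
    (f g : X → EReal) (hgconv : PhiLscConvex g)
    (xstar : X) (astar : ℝ) (wstar : X)
    (hkkt1 : ∀ x : X,
      (f x - ((astar * ‖x‖ ^ 2 : ℝ) : EReal)) -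
        (f xstar - ((astar * ‖xstar‖ ^ 2 : ℝ) : EReal)) ≥
      ((⟪-wstar, x - xstar⟫ : ℝ) : EReal))
    (hkkt2 : ∀ a : ℝ, 0 ≤ a → ∀ w : X, ∀ c : ℝ,
      lscConj g a w c - lscConj g astar wstar 0 ≥
        (((-a * ‖xstar‖ ^ 2 + ⟪w, xstar⟫ + c) -
          (-astar * ‖xstar‖ ^ 2 + ⟪wstar, xstar⟫) : ℝ) : EReal)) :
    f xstar + g xstar =
      -(lscConj (fun x => f x - ((astar * ‖x‖ ^ 2 : ℝ) : EReal)) 0 (-wstar) 0) -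
        lscConj g astar wstar 0 ∧
    f xstar + g xstar = ⨅ x : X, f x + g x := by
  set F : X → EReal := fun x => f x - ((astar * ‖x‖ ^ 2 : ℝ) : EReal)
  set A := lscConj F 0 (-wstar) 0
  set B := lscConj g astar wstar 0
  have hA_ge (x : X) : (⟪-wstar, x⟫ : EReal) - F x ≤ A := by
    simpa using coe_sub_le_lscConj F 0 (-wstar) 0 x
  have hB_ge (x : X) : ((-astar * ‖x‖ ^ 2 + ⟪wstar, x⟫ : ℝ) : EReal) - g x ≤ B := by
    simpa using coe_sub_le_lscConj g astar wstar 0 x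
  have hA : A = (⟪-wstar, xstar⟫ : EReal) - F xstar := by
    simpa [A, lscConj] using iSup_coe_sub_eq_of_subgradient (⟪-wstar, ·⟫) F xstar
      fun x => by simpa only [inner_sub_right] using hkkt1 x
  have hB : B = ((-astar * ‖xstar‖ ^ 2 + ⟪wstar, xstar⟫ : ℝ) : EReal) - g xstar :=
    le_antisymm (EReal.le_coe_sub_comm (hgconv.le_coe_sub_of_subgradient hkkt2)) (hB_ge xstar)
  have hsplit (x : X) : f x + g x =
      -((⟪-wstar, x⟫ : EReal) - F x) - (((-astar * ‖x‖ ^ 2 + ⟪wstar, x⟫ : ℝ) : EReal) - g x) :=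
    EReal.add_eq_neg_coe_sub_sub_coe_sub (by rw [inner_neg_left]; ring)
  have hopt : f xstar + g xstar = -A - B := by rw [hsplit, hA, hB]
  have hweak (x : X) : -A - B ≤ f x + g x :=
    hsplit x ▸ EReal.sub_le_sub (EReal.neg_le_neg_iff.2 (hA_ge x)) (hB_ge x)
  exact ⟨hopt, le_antisymm (le_iInf fun x => hopt ▸ hweak x) (iInf_le _ xstar)⟩

/-- KKT sufficiency in the `Φ_lsc` setting: if `(0,−w*) ∈ ∂_lsc f̃(x*)` with
`f̃ = f − a*‖·‖²` and `x* ∈ ∂_X g*_lsc(a*,w*)`, then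
`f(x*) + g(x*) = −f̃*(0,−w*) − g*(a*,w*)` and this value is the primal value. -/
theorem kkt_sufficient_lsc {X : Type*} [NormedAddCommGroup X]
    [InnerProductSpace ℝ X] [CompleteSpace X]
    (f g : X → EReal) (hfconv : PhiLscConvex f) (hgconv : PhiLscConvex g)
    (xstar : X) (astar : ℝ) (hastar : 0 ≤ astar) (wstar : X)
    (hkkt1 : ∀ x : X,
      (f x - ((astar * ‖x‖ ^ 2 : ℝ) : EReal)) -
        (f xstar - ((astar * ‖xstar‖ ^ 2 : ℝ) : EReal)) ≥
      ((⟪-wstar, x - xstar⟫ : ℝ) : EReal))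
    (hkkt2 : ∀ a : ℝ, 0 ≤ a → ∀ w : X, ∀ c : ℝ,
      lscConj g a w c - lscConj g astar wstar 0 ≥
        (((-a * ‖xstar‖ ^ 2 + ⟪w, xstar⟫ + c) -
          (-astar * ‖xstar‖ ^ 2 + ⟪wstar, xstar⟫) : ℝ) : EReal)) :
    f xstar + g xstar =
      -(lscConj (fun x => f x - ((astar * ‖x‖ ^ 2 : ℝ) : EReal)) 0 (-wstar) 0) -
        lscConj g astar wstar 0 ∧
    f xstar + g xstar = ⨅ x : X, f x + g x :=
  kkt_sufficient_lsc_general f g hgconv xstar astar wstar hkkt1 hkkt2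
end
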